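/- Soundness of the metric HML for states: for every state formula φ of the metric HML and all states s, t of an image-finite pLTS, |⟦φ⟧(s) − ⟦φ⟧(t)| ≤ d_b(s,t), where d_b is the state-based bisimilarity metric. Hence the logical metric d^L(s,t) = sup_φ |⟦φ⟧(s) − ⟦φ⟧(t)| satisfies d^L ⊑ d_b. -/
import Mathlib


open scoped BigOperators

/-- A (full) probability distribution over a finite set `S`. -/
def IsDist {S : Type} [Fintype S] (Δ : S → ℝ) : Prop :=
  (∀ s, 0 ≤ Δ s) ∧ ∑ s, Δ s = 1

/-- A matching (coupling) for a pair of distributions. -/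
def IsMatching {S : Type} [Fintype S] (ω : S × S → ℝ) (Δ Θ : S → ℝ) : Prop :=
  IsDist ω ∧ (∀ s, ∑ t, ω (s, t) = Δ s) ∧ (∀ t, ∑ s, ω (s, t) = Θ t)

/-- The Kantorovich lifting of `d` (primal formulation, via matchings). -/
noncomputable def Kan {S : Type} [Fintype S] (d : S → S → ℝ) (Δ Θ : S → ℝ) : ℝ :=
  sInf {r | ∃ ω : S × S → ℝ, IsMatching ω Δ Θ ∧ r = ∑ p : S × S, d p.1 p.2 * ω p}

/-- The Kantorovich lifting of `d` (dual linear-programming formulation). -/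
noncomputable def KanD {S : Type} [Fintype S] (d : S → S → ℝ) (Δ Θ : S → ℝ) : ℝ :=
  sSup {r | ∃ x : S → ℝ, (∀ s, 0 ≤ x s ∧ x s ≤ 1) ∧ (∀ s t, x s - x t ≤ d s t) ∧
    r = ∑ s, (Δ s - Θ s) * x s}

/-- `d` is a pseudometric. -/
def IsPseudometric {X : Type*} (d : X → X → ℝ) : Prop :=
  (∀ x, d x x = 0) ∧ (∀ x y, d x y = d y x) ∧ ∀ x y z, d x z ≤ d x y + d y z

/-- `d` is `1`-bounded (takes values in `[0,1]`). -/
def Bounded1 {X : Type*} (d : X → X → ℝ) : Prop := ∀ x y, 0 ≤ d x y ∧ d x y ≤ 1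

open Classical in
/-- Infimum of a set of reals with the convention `inf ∅ = 1`. -/
noncomputable def inf1 (s : Set ℝ) : ℝ := if s.Nonempty then sInf s else 1

open Classical in
/-- Supremum of a set of reals with the convention `sup ∅ = 0`. -/
noncomputable def sup0 (s : Set ℝ) : ℝ := if s.Nonempty then sSup s else 0

/-- The Hausdorff lifting of a `1`-bounded metric to subsets. -/
noncomputable def hausd {X : Type*} (d : X → X → ℝ) (P Q : Set X) : ℝ :=
  max (sup0 {r | ∃ x ∈ P, r = inf1 {r' | ∃ y ∈ Q, r' = d x y}})
      (sup0 {r | ∃ y ∈ Q, r = inf1 {r' | ∃ x ∈ P, r' = d x y}})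

/-- A probabilistic labelled transition system. -/
structure PLTS (S : Type) (A : Type) where
  trans : S → A → (S → ℝ) → Prop

/-- The set of `a`-successor distributions of state `s`. -/
def der {S A : Type} (T : PLTS S A) (s : S) (a : A) : Set (S → ℝ) := {Δ | T.trans s a Δ}

/-- Image-finiteness of a pLTS. -/
def ImageFinite {S A : Type} (T : PLTS S A) : Prop := ∀ s a, (der T s a).Finite

/-- Every transition target is a (full) distribution. -/
def WellFormed {S A : Type} [Fintype S] (T : PLTS S A) : Prop :=
  ∀ s a Δ, T.trans s a Δ → IsDist Δ

/-- `d` is a state-based bisimulation metric. -/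
def IsSBM {S A : Type} [Fintype S] (T : PLTS S A) (d : S → S → ℝ) : Prop :=
  IsPseudometric d ∧ Bounded1 d ∧
  ∀ s t (ε : ℝ), 0 ≤ ε → ε < 1 → d s t ≤ ε →
    ∀ a Δ, T.trans s a Δ → ∃ Δ', T.trans t a Δ' ∧ Kan d Δ Δ' ≤ ε

/-- The unit interval `[0,1]` as a type of probabilities. -/
abbrev UI : Type := { p : ℝ // 0 ≤ p ∧ p ≤ 1 }

mutual
  /-- State formulae of the metric HML. -/
  inductive SF (A : Type) : Type where
    | top : SF A
    | neg : SF A → SF A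
    | sub : SF A → UI → SF A
    | and : SF A → SF A → SF A
    | dia : A → DF A → SF A
  /-- Distribution formulae of the metric HML. -/
  inductive DF (A : Type) : Type where
    | sub : DF A → UI → DF A
    | and : DF A → DF A → DF A
    | box : SF A → DF A
end

mutual
  /-- Semantics of state formulae. -/
  noncomputable def semS {S A : Type} [Fintype S] (T : PLTS S A) : SF A → S → ℝ
    | SF.top, _ => 1
    | SF.neg φ, s => 1 - semS T φ s
    | SF.sub φ p, s => max (semS T φ s - p.1) 0
    | SF.and φ₁ φ₂, s => min (semS T φ₁ s) (semS T φ₂ s)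
    | SF.dia a ψ, s => sup0 {r | ∃ Δ, T.trans s a Δ ∧ r = semD T ψ Δ}
  /-- Semantics of distribution formulae. -/
  noncomputable def semD {S A : Type} [Fintype S] (T : PLTS S A) : DF A → (S → ℝ) → ℝ
    | DF.sub ψ p, Δ => max (semD T ψ Δ - p.1) 0
    | DF.and ψ₁ ψ₂, Δ => min (semD T ψ₁ Δ) (semD T ψ₂ Δ)
    | DF.box φ, Δ => ∑ s, Δ s * semS T φ s
end

/-- The logical metric on states induced by state formulae. -/
noncomputable def dLogic {S A : Type} [Fintype S] (T : PLTS S A) : S → S → ℝ :=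
  fun s t => sSup {r | ∃ φ : SF A, r = |semS T φ s - semS T φ t|}

/-- The logical metric on distributions induced by distribution formulae. -/
noncomputable def dDLogic {S A : Type} [Fintype S] (T : PLTS S A) : (S → ℝ) → (S → ℝ) → ℝ :=
  fun Δ Θ => sSup {r | ∃ ψ : DF A, r = |semD T ψ Δ - semD T ψ Θ|}

/- ---------- auxiliary lemmas ---------- -/

lemma sup0_nonneg_of (X : Set ℝ) (hb : BddAbove X) (h : ∀ r ∈ X, 0 ≤ r) : 0 ≤ sup0 X := by
  unfold sup0
  split_ifs with hne
  · obtain ⟨r, hr⟩ := hne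
    exact le_trans (h r hr) (le_csSup hb hr)
  · exact le_refl 0

lemma sup0_le' (X : Set ℝ) {c : ℝ} (hc : 0 ≤ c) (h : ∀ r ∈ X, r ≤ c) : sup0 X ≤ c := by
  unfold sup0
  split_ifs with hne
  · exact csSup_le hne h
  · exact hc

lemma le_sup0 (X : Set ℝ) (hb : BddAbove X) {r : ℝ} (hr : r ∈ X) : r ≤ sup0 X := by
  unfold sup0
  rw [if_pos ⟨r, hr⟩]
  exact le_csSup hb hr

lemma sup0_bounds (X : Set ℝ) (h : ∀ r ∈ X, 0 ≤ r ∧ r ≤ 1) : 0 ≤ sup0 X ∧ sup0 X ≤ 1 :=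
  ⟨sup0_nonneg_of X ⟨1, fun r hr => (h r hr).2⟩ (fun r hr => (h r hr).1),
   sup0_le' X zero_le_one (fun r hr => (h r hr).2)⟩

lemma matching_exists {S : Type} [Fintype S] {Δ Θ : S → ℝ} (hΔ : IsDist Δ) (hΘ : IsDist Θ) :
    IsMatching (fun p : S × S => Δ p.1 * Θ p.2) Δ Θ := by
  refine ⟨⟨fun p => mul_nonneg (hΔ.1 p.1) (hΘ.1 p.2), ?_⟩, fun s => ?_, fun t => ?_⟩
  · rw [Fintype.sum_prod_type]
    simp only [← Finset.mul_sum, hΘ.2, mul_one, hΔ.2]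
  · simp only []
    rw [← Finset.mul_sum, hΘ.2, mul_one]
  · simp only []
    rw [← Finset.sum_mul, hΔ.2, one_mul]

mutual
theorem boundS {S A : Type} [Fintype S] (T : PLTS S A) (hwf : WellFormed T) :
    ∀ (φ : SF A) (s : S), 0 ≤ semS T φ s ∧ semS T φ s ≤ 1
  | SF.top, s => by simp [semS]
  | SF.neg φ, s => by
      have := boundS T hwf φ s
      simp only [semS]; constructor <;> linarith [this.1, this.2]
  | SF.sub φ p, s => by
      have := boundS T hwf φ s
      simp only [semS]
      refine ⟨le_max_right _ _, max_le (by linarith [this.2, p.2.1]) zero_le_one⟩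
  | SF.and φ₁ φ₂, s => by
      have h1 := boundS T hwf φ₁ s
      have h2 := boundS T hwf φ₂ s
      simp only [semS]
      exact ⟨le_min h1.1 h2.1, le_trans (min_le_left _ _) h1.2⟩
  | SF.dia a ψ, s => by
      simp only [semS]
      refine sup0_bounds _ ?_
      rintro r ⟨Δ, htr, rfl⟩
      exact boundD T hwf ψ Δ (hwf s a Δ htr)
theorem boundD {S A : Type} [Fintype S] (T : PLTS S A) (hwf : WellFormed T) :
    ∀ (ψ : DF A) (Δ : S → ℝ), IsDist Δ → 0 ≤ semD T ψ Δ ∧ semD T ψ Δ ≤ 1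
  | DF.sub ψ p, Δ, hΔ => by
      have := boundD T hwf ψ Δ hΔ
      simp only [semD]
      refine ⟨le_max_right _ _, max_le (by linarith [this.2, p.2.1]) zero_le_one⟩
  | DF.and ψ₁ ψ₂, Δ, hΔ => by
      have h1 := boundD T hwf ψ₁ Δ hΔ
      have h2 := boundD T hwf ψ₂ Δ hΔ
      simp only [semD]
      exact ⟨le_min h1.1 h2.1, le_trans (min_le_left _ _) h1.2⟩
  | DF.box φ, Δ, hΔ => by
      simp only [semD]
      constructor
      · exact Finset.sum_nonneg fun u _ => mul_nonneg (hΔ.1 u) (boundS T hwf φ u).1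
      · calc ∑ u, Δ u * semS T φ u ≤ ∑ u, Δ u * 1 :=
              Finset.sum_le_sum fun u _ =>
                mul_le_mul_of_nonneg_left (boundS T hwf φ u).2 (hΔ.1 u)
          _ = 1 := by simp [hΔ.2]
end

mutual
theorem soundS {S A : Type} [Fintype S] (T : PLTS S A) (hwf : WellFormed T)
    (hfin : ImageFinite T) (db : S → S → ℝ) (hsbm : IsSBM T db) :
    ∀ (φ : SF A) (s t : S), |semS T φ s - semS T φ t| ≤ db s t
  | SF.top, s, t => by
      simp only [semS, sub_self, abs_zero]
      exact (hsbm.2.1 s t).1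
  | SF.neg φ, s, t => by
      have h := soundS T hwf hfin db hsbm φ s t
      simp only [semS]
      calc |1 - semS T φ s - (1 - semS T φ t)| = |semS T φ t - semS T φ s| := by ring_nf
        _ = |semS T φ s - semS T φ t| := abs_sub_comm _ _
        _ ≤ db s t := h
  | SF.sub φ p, s, t => by
      have h := soundS T hwf hfin db hsbm φ s t
      simp only [semS]
      calc |max (semS T φ s - p.1) 0 - max (semS T φ t - p.1) 0|
            ≤ |semS T φ s - p.1 - (semS T φ t - p.1)| := abs_max_sub_max_le_abs _ _ _
        _ = |semS T φ s - semS T φ t| := by ring_nf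
        _ ≤ db s t := h
  | SF.and φ₁ φ₂, s, t => by
      have h1 := soundS T hwf hfin db hsbm φ₁ s t
      have h2 := soundS T hwf hfin db hsbm φ₂ s t
      simp only [semS]
      calc |min (semS T φ₁ s) (semS T φ₂ s) - min (semS T φ₁ t) (semS T φ₂ t)|
            ≤ max |semS T φ₁ s - semS T φ₁ t| |semS T φ₂ s - semS T φ₂ t| :=
              abs_min_sub_min_le_max _ _ _ _
        _ ≤ db s t := max_le h1 h2
  | SF.dia a ψ, s, t => by
      simp only [semS]
      set P := {r | ∃ Δ, T.trans s a Δ ∧ r = semD T ψ Δ} with hPdef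
      set Q := {r | ∃ Δ, T.trans t a Δ ∧ r = semD T ψ Δ} with hQdef
      have hPfin : P.Finite := by
        refine ((hfin s a).image (semD T ψ)).subset ?_
        rintro r ⟨Δ, h1, h2⟩; exact ⟨Δ, h1, h2.symm⟩
      have hQfin : Q.Finite := by
        refine ((hfin t a).image (semD T ψ)).subset ?_
        rintro r ⟨Δ, h1, h2⟩; exact ⟨Δ, h1, h2.symm⟩
      have hPb : ∀ r ∈ P, 0 ≤ r ∧ r ≤ 1 := by
        rintro r ⟨Δ, h1, rfl⟩; exact boundD T hwf ψ Δ (hwf s a Δ h1)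
      have hQb : ∀ r ∈ Q, 0 ≤ r ∧ r ≤ 1 := by
        rintro r ⟨Δ, h1, rfl⟩; exact boundD T hwf ψ Δ (hwf t a Δ h1)
      have hP01 := sup0_bounds P hPb
      have hQ01 := sup0_bounds Q hQb
      have hε0 : 0 ≤ db s t := (hsbm.2.1 s t).1
      by_cases hlt : db s t < 1
      · have h1 : sup0 P ≤ sup0 Q + db s t := by
          refine sup0_le' _ (add_nonneg hQ01.1 hε0) ?_
          rintro r ⟨Δ, htr, rfl⟩
          obtain ⟨Δ', htr', hK⟩ := hsbm.2.2 s t (db s t) hε0 hlt le_rfl a Δ htr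
          have hsd := soundD T hwf hfin db hsbm ψ Δ Δ' (hwf s a Δ htr) (hwf t a Δ' htr')
          have hmem : semD T ψ Δ' ∈ Q := ⟨Δ', htr', rfl⟩
          have hle := le_sup0 Q hQfin.bddAbove hmem
          have := abs_le.1 hsd
          linarith [this.2]
        have h2 : sup0 Q ≤ sup0 P + db s t := by
          refine sup0_le' _ (add_nonneg hP01.1 hε0) ?_
          rintro r ⟨Δ, htr, rfl⟩
          have hts : db t s ≤ db s t := le_of_eq (hsbm.1.2.1 t s)
          obtain ⟨Δ', htr', hK⟩ := hsbm.2.2 t s (db s t) hε0 hlt hts a Δ htr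
          have hsd := soundD T hwf hfin db hsbm ψ Δ Δ' (hwf t a Δ htr) (hwf s a Δ' htr')
          have hmem : semD T ψ Δ' ∈ P := ⟨Δ', htr', rfl⟩
          have hle := le_sup0 P hPfin.bddAbove hmem
          have := abs_le.1 hsd
          linarith [this.2]
        rw [abs_sub_le_iff]
        constructor <;> linarith
      · have h1 : db s t = 1 := le_antisymm (hsbm.2.1 s t).2 (not_lt.1 hlt)
        rw [h1, abs_sub_le_iff]
        constructor <;> linarith [hP01.1, hP01.2, hQ01.1, hQ01.2]
theorem soundD {S A : Type} [Fintype S] (T : PLTS S A) (hwf : WellFormed T)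
    (hfin : ImageFinite T) (db : S → S → ℝ) (hsbm : IsSBM T db) :
    ∀ (ψ : DF A) (Δ Θ : S → ℝ), IsDist Δ → IsDist Θ →
      |semD T ψ Δ - semD T ψ Θ| ≤ Kan db Δ Θ
  | DF.sub ψ p, Δ, Θ, hΔ, hΘ => by
      have h := soundD T hwf hfin db hsbm ψ Δ Θ hΔ hΘ
      simp only [semD]
      calc |max (semD T ψ Δ - p.1) 0 - max (semD T ψ Θ - p.1) 0|
            ≤ |semD T ψ Δ - p.1 - (semD T ψ Θ - p.1)| := abs_max_sub_max_le_abs _ _ _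
        _ = |semD T ψ Δ - semD T ψ Θ| := by ring_nf
        _ ≤ Kan db Δ Θ := h
  | DF.and ψ₁ ψ₂, Δ, Θ, hΔ, hΘ => by
      have h1 := soundD T hwf hfin db hsbm ψ₁ Δ Θ hΔ hΘ
      have h2 := soundD T hwf hfin db hsbm ψ₂ Δ Θ hΔ hΘ
      simp only [semD]
      calc |min (semD T ψ₁ Δ) (semD T ψ₂ Δ) - min (semD T ψ₁ Θ) (semD T ψ₂ Θ)|
            ≤ max |semD T ψ₁ Δ - semD T ψ₁ Θ| |semD T ψ₂ Δ - semD T ψ₂ Θ| :=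
              abs_min_sub_min_le_max _ _ _ _
        _ ≤ Kan db Δ Θ := max_le h1 h2
  | DF.box φ, Δ, Θ, hΔ, hΘ => by
      simp only [semD]
      refine le_csInf ⟨_, ⟨fun p : S × S => Δ p.1 * Θ p.2, matching_exists hΔ hΘ, rfl⟩⟩ ?_
      rintro r ⟨ω, ⟨⟨hω0, _⟩, hωΔ, hωΘ⟩, rfl⟩
      have e1 : ∑ u, Δ u * semS T φ u = ∑ p : S × S, ω p * semS T φ p.1 := by
        rw [Fintype.sum_prod_type]
        refine Finset.sum_congr rfl fun u _ => ?_
        rw [← hωΔ u, Finset.sum_mul]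
      have e2 : ∑ v, Θ v * semS T φ v = ∑ p : S × S, ω p * semS T φ p.2 := by
        rw [Fintype.sum_prod_type, Finset.sum_comm]
        refine Finset.sum_congr rfl fun v _ => ?_
        rw [← hωΘ v, Finset.sum_mul]
      rw [e1, e2, ← Finset.sum_sub_distrib]
      calc |∑ p : S × S, (ω p * semS T φ p.1 - ω p * semS T φ p.2)|
            ≤ ∑ p : S × S, |ω p * semS T φ p.1 - ω p * semS T φ p.2| :=
              Finset.abs_sum_le_sum_abs _ _
        _ ≤ ∑ p : S × S, db p.1 p.2 * ω p := by
            refine Finset.sum_le_sum fun p _ => ?_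
            rw [← mul_sub, abs_mul, abs_of_nonneg (hω0 p), mul_comm]
            exact mul_le_mul_of_nonneg_right
              (soundS T hwf hfin db hsbm φ p.1 p.2) (hω0 p)
end

/-- Soundness of the metric HML for states: state formulae are non-expansive
with respect to the state-based bisimilarity metric, hence the logical state
metric is dominated by the bisimilarity metric. -/
theorem hml_state_soundness {S A : Type} [Fintype S] (T : PLTS S A)
    (hwf : WellFormed T) (hfin : ImageFinite T)
    (db : S → S → ℝ)
    (hdb : IsSBM T db ∧ ∀ d, IsSBM T d → ∀ s t, db s t ≤ d s t) :
    (∀ (φ : SF A) (s t : S), |semS T φ s - semS T φ t| ≤ db s t) ∧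
    (∀ s t : S, dLogic T s t ≤ db s t) := by
  have hs := soundS T hwf hfin db hdb.1
  refine ⟨hs, fun s t => ?_⟩
  refine csSup_le ⟨_, SF.top, rfl⟩ ?_
  rintro r ⟨φ, rfl⟩
  exact hs φ s t
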